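/- arXiv:2103.07299 — 4 statements merged into one kernel-verified Lean document; each statement's English description precedes it below -/
import Mathlib

section
/- Let f : ℝ → ℝ be continuous on [0,1] and define y : [0,1] → ℝ by y(x) := −2·[(1 − √x)·∫₀ˣ f(t)·√t dt + √x·∫ₓ¹ f(t)·(1 − √t) dt]. Then y(0) = 0, y(1) = 0, y is differentiable on (0,1), the function x ↦ √x · y′(x) is differentiable on (0,1), and its derivative satisfies d/dx (√x · y′(x)) = f(x) for every x ∈ (0,1). In other words, y solves the singular boundary value problem D(√x · D y)(x) = f(x) on (0,1) with y(0) = y(1) = 0. -/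
/-!
On `(0, 1)` the homogeneous equation `D(√x · D u) = 0` has the solutions `1 - √x` and `√x`, and
`y` is their combination by variation of parameters with the primitives
`L x = ∫₀ˣ f(t) √t dt` and `U x = ∫ₓ¹ f(t) (1 - √t) dt`. Differentiating, the terms carrying `f x`
cancel and `√x · y'(x) = L x - U x`, whose derivative is `f x √x + f x (1 - √x) = f x`.
-/

open Real Set Topology

section FundamentalTheorem

variable {E : Type*} [NormedAddCommGroup E] [NormedSpace ℝ E] [CompleteSpace E]
  {g : ℝ → E} {a b x : ℝ}

theorem ContinuousOn.integral_hasDerivAt_right (hg : ContinuousOn g (Icc a b))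
    (hx : x ∈ Ioo a b) : HasDerivAt (fun u => ∫ t in a..u, g t) (g x) x :=
  intervalIntegral.integral_hasDerivAt_right
    (hg.mono (by rw [uIcc_of_le hx.1.le]; exact Icc_subset_Icc_right hx.2.le)).intervalIntegrable
    ((hg.mono Ioo_subset_Icc_self).stronglyMeasurableAtFilter isOpen_Ioo x hx)
    (hg.continuousAt (Icc_mem_nhds hx.1 hx.2))

theorem ContinuousOn.integral_hasDerivAt_left (hg : ContinuousOn g (Icc a b))
    (hx : x ∈ Ioo a b) : HasDerivAt (fun u => ∫ t in u..b, g t) (-g x) x :=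
  intervalIntegral.integral_hasDerivAt_left
    (hg.mono (by rw [uIcc_of_le hx.2.le]; exact Icc_subset_Icc_left hx.1.le)).intervalIntegrable
    ((hg.mono Ioo_subset_Icc_self).stronglyMeasurableAtFilter isOpen_Ioo x hx)
    (hg.continuousAt (Icc_mem_nhds hx.1 hx.2))

end FundamentalTheorem

theorem hasDerivAt_variation_of_parameters_sqrt {L U : ℝ → ℝ} {c x : ℝ} (hx : 0 < x)
    (hL : HasDerivAt L (c * √x) x) (hU : HasDerivAt U (-(c * (1 - √x))) x) :
    HasDerivAt (fun x => -2 * ((1 - √x) * L x + √x * U x)) ((L x - U x) / √x) x := by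
  have hsqrt : HasDerivAt (√·) (1 / (2 * √x)) x := hasDerivAt_sqrt hx.ne'
  refine (((hsqrt.const_sub 1).mul hL).add (hsqrt.mul hU)).const_mul (-2)
    |>.congr_deriv ?_
  have hsqrt_ne : √x ≠ 0 := sqrt_ne_zero'.mpr hx
  field_simp
  ring

/-- The function `y(x) = −2·[(1−√x)·∫₀ˣ f(t)·√t dt + √x·∫ₓ¹ f(t)·(1−√t) dt]` solves the
singular boundary value problem `D(√x · D y)(x) = f(x)` on `(0,1)` with `y(0) = y(1) = 0`. -/
theorem stmt_1 (f : ℝ → ℝ) (hf : ContinuousOn f (Set.Icc 0 1))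
    (y : ℝ → ℝ)
    (hy : y = fun x => -2 * ((1 - Real.sqrt x) * (∫ t in (0:ℝ)..x, f t * Real.sqrt t) +
      Real.sqrt x * ∫ t in x..(1:ℝ), f t * (1 - Real.sqrt t))) :
    y 0 = 0 ∧ y 1 = 0 ∧
      (∀ x ∈ Set.Ioo (0:ℝ) 1, DifferentiableAt ℝ y x) ∧
      (∀ x ∈ Set.Ioo (0:ℝ) 1,
        DifferentiableAt ℝ (fun t => Real.sqrt t * deriv y t) x ∧
        deriv (fun t => Real.sqrt t * deriv y t) x = f x) := by
  set L : ℝ → ℝ := fun x => ∫ t in (0:ℝ)..x, f t * √t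
  set U : ℝ → ℝ := fun x => ∫ t in x..(1:ℝ), f t * (1 - √t)
  have hL : ∀ x ∈ Ioo (0:ℝ) 1, HasDerivAt L (f x * √x) x := fun x hx =>
    (hf.mul continuous_sqrt.continuousOn).integral_hasDerivAt_right hx
  have hU : ∀ x ∈ Ioo (0:ℝ) 1, HasDerivAt U (-(f x * (1 - √x))) x := fun x hx =>
    (hf.mul (continuousOn_const.sub continuous_sqrt.continuousOn)).integral_hasDerivAt_left hx
  have hy' : ∀ x ∈ Ioo (0:ℝ) 1, HasDerivAt y ((L x - U x) / √x) x := fun x hx =>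
    hy ▸ hasDerivAt_variation_of_parameters_sqrt hx.1 (hL x hx) (hU x hx)
  refine ⟨by simp [hy], by simp [hy], fun x hx => (hy' x hx).differentiableAt, fun x hx => ?_⟩
  have hflux : (fun t => √t * deriv y t) =ᶠ[𝓝 x] L - U := by
    filter_upwards [isOpen_Ioo.mem_nhds hx] with t ht
    rw [Pi.sub_apply, (hy' t ht).deriv, mul_div_cancel₀ _ (sqrt_ne_zero'.mpr ht.1)]
  have hLU : HasDerivAt (L - U) (f x) x := ((hL x hx).sub (hU x hx)).congr_deriv (by ring)
  exact ⟨hLU.differentiableAt.congr_of_eventuallyEq hflux, hflux.deriv_eq.trans hLU.deriv⟩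
end

section
/- Let a < b, let n ∈ ℕ, let T : Fin n → ([a,b] → ℝ) be nonnegative functions with ∑ⱼ Tⱼ(x) = 1 for all x ∈ [a,b], let τ : Fin n → [a,b] be interpolation points, and let A be the n×n matrix with entries A i j = Tⱼ(τᵢ). Assume A is invertible. For a continuous g : [a,b] → ℝ let c := A⁻¹ ⬝ (g ∘ τ) (matrix–vector product with the vector of values g(τᵢ)) and s := ∑ⱼ cⱼ·Tⱼ. Then s(τᵢ) = g(τᵢ) for every i, and sup_{x ∈ [a,b]} |s(x)| ≤ ‖A⁻¹‖_∞ · sup_{x ∈ [a,b]} |g(x)|, where ‖·‖_∞ is the matrix norm given by the maximum absolute row sum (the operator norm induced by the sup norm on ℝⁿ). -/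
attribute [local instance] Matrix.linftyOpNormedAddCommGroup Matrix.linftyOpNormedRing

/-- Spline interpolation with a nonnegative partition-of-unity basis: if `A = [Tⱼ(τᵢ)]` is
the invertible interpolation matrix and `c = A⁻¹·(g ∘ τ)`, then `s = ∑ⱼ cⱼ·Tⱼ` interpolates
`g` at the points `τᵢ` and `sup |s| ≤ ‖A⁻¹‖_∞ · sup |g|`, where `‖·‖_∞` is the maximum
absolute row sum matrix norm. -/
theorem stmt_8 (a b : ℝ) (hab : a < b) (n : ℕ)
    (T : Fin n → Set.Icc a b → ℝ)
    (hT : ∀ j, ∀ x : Set.Icc a b, 0 ≤ T j x)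
    (hsum : ∀ x : Set.Icc a b, ∑ j, T j x = 1)
    (τ : Fin n → Set.Icc a b)
    (A : Matrix (Fin n) (Fin n) ℝ) (hA : A = Matrix.of fun i j => T j (τ i))
    (hAinv : IsUnit A)
    (g : Set.Icc a b → ℝ) (hg : Continuous g)
    (c : Fin n → ℝ) (hc : c = A⁻¹.mulVec fun i => g (τ i))
    (s : Set.Icc a b → ℝ) (hs : s = fun x => ∑ j, c j * T j x) :
    (∀ i, s (τ i) = g (τ i)) ∧
      (⨆ x : Set.Icc a b, |s x|) ≤ ‖A⁻¹‖ * ⨆ x : Set.Icc a b, |g x| := by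
  have hdet : IsUnit A.det := (Matrix.isUnit_iff_isUnit_det A).mp hAinv
  have hne : Nonempty (Set.Icc a b) := ⟨⟨a, by constructor <;> [rfl; exact hab.le]⟩⟩
  -- interpolation
  have hinterp : ∀ i, s (τ i) = g (τ i) := by
    intro i
    have : s (τ i) = A.mulVec c i := by
      simp [hs, hA, Matrix.mulVec, dotProduct, mul_comm]
    rw [this, hc, Matrix.mulVec_mulVec, Matrix.mul_nonsing_inv A hdet, Matrix.one_mulVec]
  refine ⟨hinterp, ?_⟩
  -- bounds
  have hbddg : BddAbove (Set.range fun x : Set.Icc a b => |g x|) :=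
    (isCompact_range (continuous_abs.comp hg)).bddAbove
  have hgsup_nonneg : 0 ≤ ⨆ x : Set.Icc a b, |g x| :=
    Real.iSup_nonneg fun x => abs_nonneg _
  have hvle : ‖(fun i => g (τ i))‖ ≤ ⨆ x : Set.Icc a b, |g x| := by
    rw [pi_norm_le_iff_of_nonneg hgsup_nonneg]
    intro i
    rw [Real.norm_eq_abs]
    exact le_ciSup hbddg (τ i)
  have hcle : ‖c‖ ≤ ‖A⁻¹‖ * ⨆ x : Set.Icc a b, |g x| := by
    rw [hc]
    calc ‖A⁻¹.mulVec (fun i => g (τ i))‖ ≤ ‖A⁻¹‖ * ‖(fun i => g (τ i))‖ :=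
          Matrix.linfty_opNorm_mulVec _ _
      _ ≤ ‖A⁻¹‖ * ⨆ x : Set.Icc a b, |g x| :=
          mul_le_mul_of_nonneg_left hvle (norm_nonneg _)
  have hsle : ∀ x : Set.Icc a b, |s x| ≤ ‖c‖ := by
    intro x
    rw [hs]
    calc |∑ j, c j * T j x| ≤ ∑ j, |c j * T j x| := Finset.abs_sum_le_sum_abs _ _
      _ = ∑ j, |c j| * T j x := by
          refine Finset.sum_congr rfl fun j _ => ?_
          rw [abs_mul, abs_of_nonneg (hT j x)]
      _ ≤ ∑ j, ‖c‖ * T j x := by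
          refine Finset.sum_le_sum fun j _ => ?_
          exact mul_le_mul_of_nonneg_right (by simpa using norm_le_pi_norm c j) (hT j x)
      _ = ‖c‖ := by rw [← Finset.mul_sum, hsum x, mul_one]
  refine Real.iSup_le (fun x => (hsle x).trans hcle) ?_
  exact mul_nonneg (norm_nonneg _) hgsup_nonneg
end

section
/- Let a < b, let σ₂, σ₃ : ℝ → ℝ be continuous and strictly increasing with generalized Green's function G and Lebesgue–Stieltjes measure μ₃ of σ₃, let u₁, u : [a,b] → ℝ with u₁ bounded, and let f, g : [a,b] → ℝ be continuous. Define y(x) := u(x) + u₁(x)·∫_{[a,b]} G(x,τ)·f(τ) dμ₃(τ) and s(x) := u(x) + u₁(x)·∫_{[a,b]} G(x,τ)·g(τ) dμ₃(τ). Then for every x ∈ [a,b], |s(x) − y(x)| ≤ 2·(σ₂(b) − σ₂(a))·(σ₃(b) − σ₃(a))·(sup_{t ∈ [a,b]} |u₁(t)|)·(sup_{t ∈ [a,b]} |g(t) − f(t)|). -/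
/-!
On `[a,b]²` the generalized Green's function is, up to sign, a product of two increments of `σ₂`
divided by `σ₂ b - σ₂ a`, each increment lying in `[0, σ₂ b - σ₂ a]`; so `|G| ≤ σ₂ b - σ₂ a`.
Squeezing `μ₃ [a,b]` by `μ₃ (t,b] = σ₃ b - σ₃ t` as `t → a⁻` gives `μ₃ [a,b] ≤ σ₃ b - σ₃ a`.
Since `s x - y x = u₁ x · ∫ G(x,·) (g - f) dμ₃`, these two bounds and the two suprema give the
estimate.
-/

open MeasureTheory Set
open scoped ENNReal

theorem le_biSup_of_bddAbove_image {α ι : Type*} [ConditionallyCompleteLattice α] {F : ι → α}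
    {s : Set ι} (hF : BddAbove (F '' s)) {i : ι} (hi : i ∈ s) : F i ≤ ⨆ i ∈ s, F i := by
  obtain ⟨M, hM⟩ := hF
  refine le_ciSup₂ (f := fun i (_ : i ∈ s) => F i) ⟨M, ?_⟩ i hi
  rintro _ ⟨_, ⟨j, rfl⟩, hj, rfl⟩
  exact hM (mem_image_of_mem F hj)

theorem measure_Icc_le_ofReal_sub {μ : Measure ℝ} {σ : ℝ → ℝ} {a b : ℝ}
    (hσ : ContinuousWithinAt σ (Iio a) a)
    (hμ : ∀ t < a, μ (Ioc t b) = ENNReal.ofReal (σ b - σ t)) :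
    μ (Icc a b) ≤ ENNReal.ofReal (σ b - σ a) := by
  refine ge_of_tendsto (ENNReal.continuous_ofReal.continuousAt.tendsto.comp
    (tendsto_const_nhds.sub hσ)) ?_
  filter_upwards [self_mem_nhdsWithin] with t ht
  exact (measure_mono (Icc_subset_Ioc_left ht)).trans_eq (hμ t ht)

theorem abs_neg_mul_div_le {p q C : ℝ} (hp₀ : 0 ≤ p) (hpC : p ≤ C) (hq₀ : 0 ≤ q)
    (hqC : q ≤ C) : |-(p * q) / C| ≤ C := by
  have hC : 0 ≤ C := hp₀.trans hpC
  rw [abs_div, abs_neg, abs_of_nonneg (mul_nonneg hp₀ hq₀), abs_of_nonneg hC]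
  exact div_le_of_le_mul₀ hC hC (mul_le_mul hpC hqC hq₀ hC)

noncomputable def generalizedGreen (σ : ℝ → ℝ) (a b x t : ℝ) : ℝ :=
  if t ≤ x then -((σ t - σ a) * (σ b - σ x)) / (σ b - σ a)
  else -((σ x - σ a) * (σ b - σ t)) / (σ b - σ a)

section generalizedGreen

variable {σ : ℝ → ℝ} {a b x : ℝ}

theorem abs_generalizedGreen_le (hσ : Monotone σ) (hx : x ∈ Icc a b) {t : ℝ}
    (ht : t ∈ Icc a b) : |generalizedGreen σ a b x t| ≤ σ b - σ a := by
  have hxa : σ x - σ a ≤ σ b - σ a := sub_le_sub_right (hσ hx.2) _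
  have hbx : σ b - σ x ≤ σ b - σ a := sub_le_sub_left (hσ hx.1) _
  have hta : σ t - σ a ≤ σ b - σ a := sub_le_sub_right (hσ ht.2) _
  have hbt : σ b - σ t ≤ σ b - σ a := sub_le_sub_left (hσ ht.1) _
  unfold generalizedGreen
  split_ifs
  · exact abs_neg_mul_div_le (sub_nonneg.2 (hσ ht.1)) hta (sub_nonneg.2 (hσ hx.2)) hbx
  · exact abs_neg_mul_div_le (sub_nonneg.2 (hσ hx.1)) hxa (sub_nonneg.2 (hσ ht.2)) hbt

theorem measurable_generalizedGreen (hσ : Monotone σ) : Measurable (generalizedGreen σ a b x) :=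
  have := hσ.measurable
  Measurable.ite (measurableSet_le measurable_id measurable_const) (by fun_prop) (by fun_prop)

variable {μ : Measure ℝ} {h : ℝ → ℝ}

theorem integrableOn_generalizedGreen_mul (hσ : Monotone σ) (hμ : μ (Icc a b) ≠ ∞)
    (hx : x ∈ Icc a b) (hh : ContinuousOn h (Icc a b)) :
    IntegrableOn (fun t => generalizedGreen σ a b x t * h t) (Icc a b) μ :=
  (Measure.integrableOn_of_bounded hμ (measurable_generalizedGreen hσ).aestronglyMeasurable
    (ae_restrict_of_forall_mem measurableSet_Icc fun _ ht => abs_generalizedGreen_le hσ hx ht)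
    ).mul_continuousOn hh isCompact_Icc

theorem abs_setIntegral_generalizedGreen_mul_le (hσ : Monotone σ) {D S : ℝ}
    (hμ : μ (Icc a b) ≤ ENNReal.ofReal D) (hD : 0 ≤ D) (hx : x ∈ Icc a b)
    (hh : ∀ t ∈ Icc a b, |h t| ≤ S) :
    |∫ t in Icc a b, generalizedGreen σ a b x t * h t ∂μ| ≤ (σ b - σ a) * S * D := by
  have hCS : 0 ≤ (σ b - σ a) * S :=
    mul_nonneg ((abs_nonneg _).trans (abs_generalizedGreen_le hσ hx hx))
      ((abs_nonneg _).trans (hh x hx))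
  rw [← Real.norm_eq_abs]
  calc ‖∫ t in Icc a b, generalizedGreen σ a b x t * h t ∂μ‖
      ≤ (σ b - σ a) * S * μ.real (Icc a b) :=
        norm_setIntegral_le_of_norm_le_const (hμ.trans_lt ENNReal.ofReal_lt_top) fun t ht =>
          (abs_mul _ _).trans_le (mul_le_mul (abs_generalizedGreen_le hσ hx ht) (hh t ht)
            (abs_nonneg _) ((abs_nonneg _).trans (abs_generalizedGreen_le hσ hx hx)))
    _ ≤ (σ b - σ a) * S * D :=
        mul_le_mul_of_nonneg_left (ENNReal.toReal_le_of_le_ofReal hD hμ) hCS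

end generalizedGreen

theorem stmt_11_general (a b : ℝ)
    (σ₂ σ₃ : ℝ → ℝ) (hσ₂m : StrictMono σ₂)
    (hσ₃c : Continuous σ₃) (hσ₃m : StrictMono σ₃)
    (μ₃ : Measure ℝ)
    (hμ₃ : ∀ u v : ℝ, u ≤ v → μ₃ (Set.Ioc u v) = ENNReal.ofReal (σ₃ v - σ₃ u))
    (G : ℝ → ℝ → ℝ)
    (hG : G = fun x t => if t ≤ x
      then -((σ₂ t - σ₂ a) * (σ₂ b - σ₂ x)) / (σ₂ b - σ₂ a)
      else -((σ₂ x - σ₂ a) * (σ₂ b - σ₂ t)) / (σ₂ b - σ₂ a))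
    (u₁ u : ℝ → ℝ) (hu₁bdd : ∃ M, ∀ t ∈ Set.Icc a b, |u₁ t| ≤ M)
    (f g : ℝ → ℝ) (hf : ContinuousOn f (Set.Icc a b)) (hg : ContinuousOn g (Set.Icc a b))
    (y s : ℝ → ℝ)
    (hy : y = fun x => u x + u₁ x * ∫ τ in Set.Icc a b, G x τ * f τ ∂μ₃)
    (hs : s = fun x => u x + u₁ x * ∫ τ in Set.Icc a b, G x τ * g τ ∂μ₃) :
    ∀ x ∈ Set.Icc a b,
      |s x - y x| ≤ 2 * (σ₂ b - σ₂ a) * (σ₃ b - σ₃ a) *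
        (⨆ t ∈ Set.Icc a b, |u₁ t|) * ⨆ t ∈ Set.Icc a b, |g t - f t| := by
  intro x hx
  obtain rfl : G = generalizedGreen σ₂ a b := hG
  subst hy hs
  have hab : a ≤ b := hx.1.trans hx.2
  have hμ : μ₃ (Icc a b) ≤ ENNReal.ofReal (σ₃ b - σ₃ a) :=
    measure_Icc_le_ofReal_sub hσ₃c.continuousWithinAt fun t ht => hμ₃ t b (ht.le.trans hab)
  have hμ_ne_top : μ₃ (Icc a b) ≠ ∞ := ne_top_of_le_ne_top ENNReal.ofReal_ne_top hμ
  obtain ⟨M, hM⟩ := hu₁bdd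
  obtain ⟨K, hK⟩ := isCompact_Icc.exists_bound_of_continuousOn (hg.sub hf)
  have hu₁x : |u₁ x| ≤ ⨆ t ∈ Icc a b, |u₁ t| :=
    le_biSup_of_bddAbove_image ⟨M, forall_mem_image.2 hM⟩ hx
  have hgf : ∀ t ∈ Icc a b, |g t - f t| ≤ ⨆ t ∈ Icc a b, |g t - f t| :=
    fun t ht => le_biSup_of_bddAbove_image ⟨K, forall_mem_image.2 hK⟩ ht
  have hdiff : (u x + u₁ x * ∫ τ in Icc a b, generalizedGreen σ₂ a b x τ * g τ ∂μ₃) -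
      (u x + u₁ x * ∫ τ in Icc a b, generalizedGreen σ₂ a b x τ * f τ ∂μ₃) =
      u₁ x * ∫ τ in Icc a b, generalizedGreen σ₂ a b x τ * (g τ - f τ) ∂μ₃ := by
    simp only [mul_sub]
    rw [integral_sub (integrableOn_generalizedGreen_mul hσ₂m.monotone hμ_ne_top hx hg)
      (integrableOn_generalizedGreen_mul hσ₂m.monotone hμ_ne_top hx hf)]
    ring
  have hC : 0 ≤ σ₂ b - σ₂ a := sub_nonneg.2 (hσ₂m.monotone hab)
  have hD : 0 ≤ σ₃ b - σ₃ a := sub_nonneg.2 (hσ₃m.monotone hab)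
  have hI := abs_setIntegral_generalizedGreen_mul_le hσ₂m.monotone hμ hD hx hgf
  have hS₁ : 0 ≤ ⨆ t ∈ Icc a b, |u₁ t| := (abs_nonneg _).trans hu₁x
  have hS₂ : 0 ≤ ⨆ t ∈ Icc a b, |g t - f t| := (abs_nonneg _).trans (hgf x hx)
  rw [hdiff, abs_mul]
  calc _ ≤ (⨆ t ∈ Icc a b, |u₁ t|) *
        ((σ₂ b - σ₂ a) * (⨆ t ∈ Icc a b, |g t - f t|) * (σ₃ b - σ₃ a)) :=
        mul_le_mul hu₁x hI (abs_nonneg _) hS₁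
    _ ≤ _ := by linarith [mul_nonneg (mul_nonneg (mul_nonneg hC hD) hS₁) hS₂]

/-- Core stability estimate for (quasi-)collocation: if `y` and `s` are the Green's
function representations built from `f` and from an approximation `g` of `f`, then
`|s(x) − y(x)| ≤ 2·(σ₂(b) − σ₂(a))·(σ₃(b) − σ₃(a))·sup|u₁|·sup|g − f|` on `[a,b]`. -/
theorem stmt_11 (a b : ℝ) (hab : a < b)
    (σ₂ σ₃ : ℝ → ℝ) (hσ₂c : Continuous σ₂) (hσ₂m : StrictMono σ₂)
    (hσ₃c : Continuous σ₃) (hσ₃m : StrictMono σ₃)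
    (μ₃ : Measure ℝ)
    (hμ₃ : ∀ u v : ℝ, u ≤ v → μ₃ (Set.Ioc u v) = ENNReal.ofReal (σ₃ v - σ₃ u))
    (G : ℝ → ℝ → ℝ)
    (hG : G = fun x t => if t ≤ x
      then -((σ₂ t - σ₂ a) * (σ₂ b - σ₂ x)) / (σ₂ b - σ₂ a)
      else -((σ₂ x - σ₂ a) * (σ₂ b - σ₂ t)) / (σ₂ b - σ₂ a))
    (u₁ u : ℝ → ℝ) (hu₁bdd : ∃ M, ∀ t ∈ Set.Icc a b, |u₁ t| ≤ M)
    (f g : ℝ → ℝ) (hf : ContinuousOn f (Set.Icc a b)) (hg : ContinuousOn g (Set.Icc a b))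
    (y s : ℝ → ℝ)
    (hy : y = fun x => u x + u₁ x * ∫ τ in Set.Icc a b, G x τ * f τ ∂μ₃)
    (hs : s = fun x => u x + u₁ x * ∫ τ in Set.Icc a b, G x τ * g τ ∂μ₃) :
    ∀ x ∈ Set.Icc a b,
      |s x - y x| ≤ 2 * (σ₂ b - σ₂ a) * (σ₃ b - σ₃ a) *
        (⨆ t ∈ Set.Icc a b, |u₁ t|) * ⨆ t ∈ Set.Icc a b, |g t - f t| :=
  stmt_11_general a b σ₂ σ₃ hσ₂m hσ₃c hσ₃m μ₃ hμ₃ G hG u₁ u hu₁bdd f g hf hg y s hy hs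
end

section
/- Let J ⊆ ℝ be an open interval, let p, q : J → ℝ with p differentiable on J, let u : J → ℝ be twice differentiable on J with u(t) ≠ 0 for all t ∈ J and with p·u′ differentiable on J, and suppose u lies in the kernel of the operator, i.e. (p·u′)′(t) + q(t)·u(t) = 0 for all t ∈ J. Then for every twice differentiable y : J → ℝ such that p·y′ and p·u²·(y/u)′ are differentiable on J, the identity (p·y′)′(t) + q(t)·y(t) = (1/u(t))·(p·u²·(y/u)′)′(t) holds for all t ∈ J. -/
/-!
Expanding `(y/u)′` by the quotient rule shows `p·u²·(y/u)′ = u·(p·y′) - y·(p·u′)`, the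
`p`-weighted Wronskian of `u` and `y`. Differentiating it, the cross terms `u′·p·y′` cancel and
`(u·(p·y′) - y·(p·u′))′ = u·(p·y′)′ - y·(p·u′)′ = u·((p·y′)′ + q·y)`, using the equation for `u`.
-/

open Filter Topology

section

variable {𝕜 : Type*} [NontriviallyNormedField 𝕜] {p u y : 𝕜 → 𝕜} {s : 𝕜}

theorem mul_sq_mul_deriv_div_eq (hy : DifferentiableAt 𝕜 y s) (hu : DifferentiableAt 𝕜 u s)
    (hu0 : u s ≠ 0) :
    p s * u s ^ 2 * deriv (fun r => y r / u r) s =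
      u s * (p s * deriv y s) - y s * (p s * deriv u s) := by
  rw [deriv_fun_div hy hu hu0]
  field_simp

theorem deriv_weighted_wronskian (hu : DifferentiableAt 𝕜 u s) (hy : DifferentiableAt 𝕜 y s)
    (hpu' : DifferentiableAt 𝕜 (fun r => p r * deriv u r) s)
    (hpy' : DifferentiableAt 𝕜 (fun r => p r * deriv y r) s) :
    deriv (fun r => u r * (p r * deriv y r) - y r * (p r * deriv u r)) s =
      u s * deriv (fun r => p r * deriv y r) s - y s * deriv (fun r => p r * deriv u r) s := by
  rw [deriv_fun_sub (hu.fun_mul hpy') (hy.fun_mul hpu'), deriv_fun_mul hu hpy',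
    deriv_fun_mul hy hpu']
  ring

end

theorem stmt_12_general (J : Set ℝ) (hJopen : IsOpen J)
    (p q u : ℝ → ℝ)
    (hu : ∀ t ∈ J, DifferentiableAt ℝ u t)
    (hu0 : ∀ t ∈ J, u t ≠ 0)
    (hpu' : ∀ t ∈ J, DifferentiableAt ℝ (fun s => p s * deriv u s) t)
    (hker : ∀ t ∈ J, deriv (fun s => p s * deriv u s) t + q t * u t = 0)
    (y : ℝ → ℝ)
    (hy : ∀ t ∈ J, DifferentiableAt ℝ y t)
    (hpy' : ∀ t ∈ J, DifferentiableAt ℝ (fun s => p s * deriv y s) t) :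
    ∀ t ∈ J, deriv (fun s => p s * deriv y s) t + q t * y t =
      (1 / u t) * deriv (fun s => p s * u s ^ 2 * deriv (fun r => y r / u r) s) t := by
  intro t ht
  have hwronskian : (fun s => p s * u s ^ 2 * deriv (fun r => y r / u r) s) =ᶠ[𝓝 t]
      fun s => u s * (p s * deriv y s) - y s * (p s * deriv u s) := by
    filter_upwards [hJopen.mem_nhds ht] with s hs
    exact mul_sq_mul_deriv_div_eq (hy s hs) (hu s hs) (hu0 s hs)
  rw [hwronskian.deriv_eq, deriv_weighted_wronskian (hu t ht) (hy t ht) (hpu' t ht) (hpy' t ht),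
    eq_neg_of_add_eq_zero_left (hker t ht)]
  field_simp [hu0 t ht]
  ring

/-- Product representation of the self-adjoint second-order operator: if `u` is a
nonvanishing solution of `(p·u′)′ + q·u = 0` on an open interval `J`, then for every
sufficiently differentiable `y`,
`(p·y′)′(t) + q(t)·y(t) = (1/u(t))·(p·u²·(y/u)′)′(t)` on `J`. -/
theorem stmt_12 (J : Set ℝ) (hJopen : IsOpen J) (hJconn : J.OrdConnected)
    (p q u : ℝ → ℝ)
    (hp : ∀ t ∈ J, DifferentiableAt ℝ p t)
    (hu : ∀ t ∈ J, DifferentiableAt ℝ u t)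
    (hu' : ∀ t ∈ J, DifferentiableAt ℝ (deriv u) t)
    (hu0 : ∀ t ∈ J, u t ≠ 0)
    (hpu' : ∀ t ∈ J, DifferentiableAt ℝ (fun s => p s * deriv u s) t)
    (hker : ∀ t ∈ J, deriv (fun s => p s * deriv u s) t + q t * u t = 0)
    (y : ℝ → ℝ)
    (hy : ∀ t ∈ J, DifferentiableAt ℝ y t)
    (hy' : ∀ t ∈ J, DifferentiableAt ℝ (deriv y) t)
    (hpy' : ∀ t ∈ J, DifferentiableAt ℝ (fun s => p s * deriv y s) t)
    (hpu2 : ∀ t ∈ J,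
      DifferentiableAt ℝ (fun s => p s * u s ^ 2 * deriv (fun r => y r / u r) s) t) :
    ∀ t ∈ J, deriv (fun s => p s * deriv y s) t + q t * y t =
      (1 / u t) * deriv (fun s => p s * u s ^ 2 * deriv (fun r => y r / u r) s) t :=
  stmt_12_general J hJopen p q u hu hu0 hpu' hker y hy hpy'
end
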